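/- Let (Z₁,Z₂,Z₃) be multivariate normal with means μ_i and covariances C_{ij}, and let X_i = exp(Z_i). Then the third joint cumulant of (X₁,X₂,X₃) equals κ₁κ₂κ₃ · [exp(C₁₂ + C₁₃ + C₂₃) − exp(C₁₂) − exp(C₁₃) − exp(C₂₃) + 2], where κ_i = exp(μ_i + ½C_{ii}) = E[X_i]. -/

import Mathlib

open MeasureTheory ProbabilityTheory
open scoped NNReal ENNReal

/-- Moment generating function of the standard gaussian. -/
lemma gaussian_mgf_std_aux (t : ℝ) :
    ∫ x, Real.exp (t * x) ∂(gaussianReal 0 1) = Real.exp (t ^ 2 / 2) := by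
  rw [gaussianReal_of_var_ne_zero 0 one_ne_zero]
  rw [show (gaussianPDF 0 1) = (fun x => ((Real.toNNReal (gaussianPDFReal 0 1 x) : ℝ≥0) : ℝ≥0∞))
    from rfl]
  rw [integral_withDensity_eq_integral_smul ((measurable_gaussianPDFReal 0 1).real_toNNReal)]
  have hpt : ∀ x : ℝ, (Real.toNNReal (gaussianPDFReal 0 1 x) : ℝ≥0) • Real.exp (t * x)
      = Real.exp (t ^ 2 / 2) * gaussianPDFReal t 1 x := by
    intro x
    rw [NNReal.smul_def, smul_eq_mul, Real.coe_toNNReal _ (gaussianPDFReal_nonneg _ _ _)]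
    simp only [gaussianPDFReal, NNReal.coe_one, mul_one, sub_zero]
    rw [mul_assoc, ← Real.exp_add,
      show -x ^ 2 / 2 + t * x = t ^ 2 / 2 + -(x - t) ^ 2 / 2 by ring, Real.exp_add]
    ring
  simp_rw [hpt]
  rw [integral_const_mul, integral_gaussianPDFReal_eq_one t one_ne_zero, mul_one]

/-- Third joint cumulant of a trivariate lognormal vector: with `(Z₁,Z₂,Z₃)` multivariate
normal (represented as `Z = μ + L G`, `G` i.i.d. standard normals, covariance `C = L Lᵀ`)
and `Xᵢ = exp Zᵢ`, the third joint cumulant of `(X₁,X₂,X₃)` equals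
`κ₁κ₂κ₃ (exp(C₁₂+C₁₃+C₂₃) − exp(C₁₂) − exp(C₁₃) − exp(C₂₃) + 2)` with
`κᵢ = exp(μᵢ + C_{ii}/2) = E[Xᵢ]`. -/
theorem lognormal_third_cumulant {Ω : Type*} [MeasurableSpace Ω] (P : Measure Ω)
    [IsProbabilityMeasure P] (G : Fin 3 → Ω → ℝ)
    (hGmeas : ∀ i, Measurable (G i))
    (hGlaw : ∀ i, Measure.map (G i) P = gaussianReal 0 1)
    (hGindep : iIndepFun G P)
    (μ : Fin 3 → ℝ) (L : Matrix (Fin 3) (Fin 3) ℝ)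
    (Z : Ω → Fin 3 → ℝ) (hZ : ∀ ω, Z ω = μ + L.mulVec (fun i => G i ω))
    (C : Matrix (Fin 3) (Fin 3) ℝ) (hC : C = L * L.transpose)
    (X : Ω → Fin 3 → ℝ) (hX : ∀ ω i, X ω i = Real.exp (Z ω i))
    (κ : Fin 3 → ℝ) (hκ : ∀ i, κ i = Real.exp (μ i + C i i / 2)) :
    (∫ ω, X ω 0 * X ω 1 * X ω 2 ∂P)
      - (∫ ω, X ω 0 ∂P) * (∫ ω, X ω 1 * X ω 2 ∂P)
      - (∫ ω, X ω 1 ∂P) * (∫ ω, X ω 0 * X ω 2 ∂P)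
      - (∫ ω, X ω 2 ∂P) * (∫ ω, X ω 0 * X ω 1 ∂P)
      + 2 * (∫ ω, X ω 0 ∂P) * (∫ ω, X ω 1 ∂P) * (∫ ω, X ω 2 ∂P)
    = κ 0 * κ 1 * κ 2 *
        (Real.exp (C 0 1 + C 0 2 + C 1 2)
          - Real.exp (C 0 1) - Real.exp (C 0 2) - Real.exp (C 1 2) + 2) := by
  -- Expectation of exp of a linear combination of the i.i.d. standard normals.
  have key : ∀ a : Fin 3 → ℝ,
      ∫ ω, Real.exp (∑ j, a j * G j ω) ∂P = Real.exp (∑ j, (a j) ^ 2 / 2) := by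
    intro a
    have hYindep : iIndepFun (fun j => fun ω => a j * G j ω) P :=
      hGindep.comp (fun j x => a j * x) (fun j => measurable_id.const_mul _)
    have hYmeas : ∀ j, Measurable (fun ω => a j * G j ω) := fun j => (hGmeas j).const_mul _
    have hmgf := hYindep.mgf_sum hYmeas Finset.univ (t := 1)
    have hsingle : ∀ j, mgf (fun ω => a j * G j ω) P 1 = Real.exp ((a j) ^ 2 / 2) := by
      intro j
      have hcont : AEStronglyMeasurable (fun x : ℝ => Real.exp (a j * x))
          (Measure.map (G j) P) :=
        (Real.continuous_exp.comp (continuous_const.mul continuous_id)).aestronglyMeasurable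
      calc mgf (fun ω => a j * G j ω) P 1
          = ∫ ω, Real.exp (a j * G j ω) ∂P := by simp only [mgf, one_mul]
        _ = ∫ x, Real.exp (a j * x) ∂(Measure.map (G j) P) := by
            rw [integral_map (hGmeas j).aemeasurable hcont]
        _ = Real.exp ((a j) ^ 2 / 2) := by rw [hGlaw j, gaussian_mgf_std_aux]
    calc ∫ ω, Real.exp (∑ j, a j * G j ω) ∂P
        = mgf (∑ j, (fun ω => a j * G j ω)) P 1 := by
          simp only [mgf, one_mul, Finset.sum_apply]
      _ = ∏ j, mgf (fun ω => a j * G j ω) P 1 := hmgf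
      _ = ∏ j, Real.exp ((a j) ^ 2 / 2) := Finset.prod_congr rfl fun j _ => hsingle j
      _ = Real.exp (∑ j, (a j) ^ 2 / 2) := (Real.exp_sum _ _).symm
  have hCe : ∀ i k, C i k = L i 0 * L k 0 + L i 1 * L k 1 + L i 2 * L k 2 := by
    intro i k
    rw [hC]
    simp [Matrix.mul_apply, Matrix.transpose_apply, Fin.sum_univ_three]
  -- General lognormal moment formula.
  have hsum : ∀ b0 b1 b2 : ℝ,
      ∫ ω, Real.exp (b0 * Z ω 0 + b1 * Z ω 1 + b2 * Z ω 2) ∂P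
        = Real.exp (b0 * μ 0 + b1 * μ 1 + b2 * μ 2
            + ((b0 * L 0 0 + b1 * L 1 0 + b2 * L 2 0) ^ 2 / 2
              + (b0 * L 0 1 + b1 * L 1 1 + b2 * L 2 1) ^ 2 / 2
              + (b0 * L 0 2 + b1 * L 1 2 + b2 * L 2 2) ^ 2 / 2)) := by
    intro b0 b1 b2
    have hz : ∀ ω, b0 * Z ω 0 + b1 * Z ω 1 + b2 * Z ω 2
        = (b0 * μ 0 + b1 * μ 1 + b2 * μ 2)
          + ∑ j, (fun j => b0 * L 0 j + b1 * L 1 j + b2 * L 2 j) j * G j ω := by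
      intro ω
      rw [hZ]
      simp only [Pi.add_apply, Matrix.mulVec, dotProduct, Fin.sum_univ_three]
      ring
    have hz2 : (fun ω => Real.exp (b0 * Z ω 0 + b1 * Z ω 1 + b2 * Z ω 2))
        = fun ω => Real.exp (b0 * μ 0 + b1 * μ 1 + b2 * μ 2)
            * Real.exp (∑ j, (fun j => b0 * L 0 j + b1 * L 1 j + b2 * L 2 j) j * G j ω) := by
      funext ω; rw [hz ω, Real.exp_add]
    rw [hz2, integral_const_mul, key, ← Real.exp_add]
    congr 1
    rw [Fin.sum_univ_three]
    try ring
  -- Single moments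
  have h0 : ∫ ω, X ω 0 ∂P = κ 0 := by
    have h := hsum 1 0 0
    simp only [one_mul, zero_mul, add_zero] at h
    calc ∫ ω, X ω 0 ∂P = ∫ ω, Real.exp (Z ω 0) ∂P := by simp_rw [hX]
      _ = _ := by rw [h, hκ]; congr 1; rw [hCe 0 0]; ring
  have h1 : ∫ ω, X ω 1 ∂P = κ 1 := by
    have h := hsum 0 1 0
    simp only [one_mul, zero_mul, add_zero, zero_add] at h
    calc ∫ ω, X ω 1 ∂P = ∫ ω, Real.exp (Z ω 1) ∂P := by simp_rw [hX]
      _ = _ := by rw [h, hκ]; congr 1; rw [hCe 1 1]; ring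
  have h2 : ∫ ω, X ω 2 ∂P = κ 2 := by
    have h := hsum 0 0 1
    simp only [one_mul, zero_mul, add_zero, zero_add] at h
    calc ∫ ω, X ω 2 ∂P = ∫ ω, Real.exp (Z ω 2) ∂P := by simp_rw [hX]
      _ = _ := by rw [h, hκ]; congr 1; rw [hCe 2 2]; ring
  -- Pair moments
  have h01 : ∫ ω, X ω 0 * X ω 1 ∂P = κ 0 * κ 1 * Real.exp (C 0 1) := by
    have h := hsum 1 1 0
    simp only [one_mul, zero_mul, add_zero] at h
    calc ∫ ω, X ω 0 * X ω 1 ∂P = ∫ ω, Real.exp (Z ω 0 + Z ω 1) ∂P := by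
          simp_rw [hX, ← Real.exp_add]
      _ = _ := by
          rw [h, hκ, hκ, ← Real.exp_add, ← Real.exp_add]
          congr 1
          rw [hCe 0 0, hCe 1 1, hCe 0 1]; ring
  have h02 : ∫ ω, X ω 0 * X ω 2 ∂P = κ 0 * κ 2 * Real.exp (C 0 2) := by
    have h := hsum 1 0 1
    simp only [one_mul, zero_mul, add_zero] at h
    calc ∫ ω, X ω 0 * X ω 2 ∂P = ∫ ω, Real.exp (Z ω 0 + Z ω 2) ∂P := by
          simp_rw [hX, ← Real.exp_add]
      _ = _ := by
          rw [h, hκ, hκ, ← Real.exp_add, ← Real.exp_add]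
          congr 1
          rw [hCe 0 0, hCe 2 2, hCe 0 2]; ring
  have h12 : ∫ ω, X ω 1 * X ω 2 ∂P = κ 1 * κ 2 * Real.exp (C 1 2) := by
    have h := hsum 0 1 1
    simp only [one_mul, zero_mul, add_zero, zero_add] at h
    calc ∫ ω, X ω 1 * X ω 2 ∂P = ∫ ω, Real.exp (Z ω 1 + Z ω 2) ∂P := by
          simp_rw [hX, ← Real.exp_add]
      _ = _ := by
          rw [h, hκ, hκ, ← Real.exp_add, ← Real.exp_add]
          congr 1
          rw [hCe 1 1, hCe 2 2, hCe 1 2]; ring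
  -- Triple moment
  have h012 : ∫ ω, X ω 0 * X ω 1 * X ω 2 ∂P
      = κ 0 * κ 1 * κ 2 * Real.exp (C 0 1 + C 0 2 + C 1 2) := by
    have h := hsum 1 1 1
    simp only [one_mul] at h
    calc ∫ ω, X ω 0 * X ω 1 * X ω 2 ∂P = ∫ ω, Real.exp (Z ω 0 + Z ω 1 + Z ω 2) ∂P := by
          simp_rw [hX, ← Real.exp_add]
      _ = _ := by
          rw [h, hκ, hκ, hκ, ← Real.exp_add, ← Real.exp_add, ← Real.exp_add]
          congr 1
          rw [hCe 0 0, hCe 1 1, hCe 2 2, hCe 0 1, hCe 0 2, hCe 1 2]; ring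
  rw [h012, h0, h1, h2, h01, h02, h12]
  ring
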